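/- arXiv:2302.06079 — 6 statements merged into one kernel-verified Lean document; each statement's English description precedes it below -/
import Mathlib

section
/- (One-step descent with inexact gradient; core inequality in the proof of Proposition 5.7.) Let E be a real Hilbert space, let 𝓛 : E → ℝ be differentiable with L-Lipschitz gradient for some L > 0, and let w, g ∈ E. Set w' := w − (1/(2L))·g. Then 𝓛(w) − 𝓛(w') ≥ (3/(16L))·‖∇𝓛(w)‖² − (7/(8L))·‖g − ∇𝓛(w)‖². -/
open MeasureTheory

open InnerProductSpace in
/-- Crude Taylor bound from an `L`-Lipschitz gradient. -/
lemma taylor_bound_of_lip_grad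
    {E : Type*} [NormedAddCommGroup E] [InnerProductSpace ℝ E] [CompleteSpace E]
    (𝓛 : E → ℝ) (hdiff : Differentiable ℝ 𝓛)
    (L : NNReal) (hlip : LipschitzWith L (gradient 𝓛)) (x y : E) :
    |𝓛 y - 𝓛 x - inner ℝ (gradient 𝓛 x) (y - x)| ≤ (L : ℝ) * ‖y - x‖ ^ 2 := by
  have hseg : segment ℝ x y ⊆ Metric.closedBall x (dist x y) := by
    apply (convex_closedBall x (dist x y)).segment_subset
    · simp [dist_nonneg]
    · simp [dist_comm]
  have key : ‖𝓛 y - 𝓛 x - (toDual ℝ E (gradient 𝓛 x)) (y - x)‖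
      ≤ ((L : ℝ) * ‖y - x‖) * ‖y - x‖ := by
    apply (convex_segment x y).norm_image_sub_le_of_norm_fderiv_le'
      (fun z _ => hdiff z)
      (fun z hz => ?_) (left_mem_segment ℝ x y) (right_mem_segment ℝ x y)
    have h1 : fderiv ℝ 𝓛 z - toDual ℝ E (gradient 𝓛 x)
        = toDual ℝ E (gradient 𝓛 z - gradient 𝓛 x) := by
      rw [map_sub]
      congr 1
      simp [gradient]
    rw [h1]
    have hlz := hlip.dist_le_mul z x
    have hz' : dist z x ≤ dist x y := by
      have := hseg hz
      simpa [dist_comm] using Metric.mem_closedBall.mp this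
    calc ‖toDual ℝ E (gradient 𝓛 z - gradient 𝓛 x)‖
        = ‖gradient 𝓛 z - gradient 𝓛 x‖ := (InnerProductSpace.toDual ℝ E).norm_map _
      _ = dist (gradient 𝓛 z) (gradient 𝓛 x) := (dist_eq_norm _ _).symm
      _ ≤ (L : ℝ) * dist z x := hlz
      _ ≤ (L : ℝ) * dist x y := mul_le_mul_of_nonneg_left hz' L.coe_nonneg
      _ = (L : ℝ) * ‖y - x‖ := by rw [dist_eq_norm, norm_sub_rev]
  rw [toDual_apply_apply] at key
  calc |𝓛 y - 𝓛 x - inner ℝ (gradient 𝓛 x) (y - x)|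
      = ‖𝓛 y - 𝓛 x - inner ℝ (gradient 𝓛 x) (y - x)‖ := rfl
    _ ≤ ((L : ℝ) * ‖y - x‖) * ‖y - x‖ := key
    _ = (L : ℝ) * ‖y - x‖ ^ 2 := by ring

set_option maxHeartbeats 800000 in
/-- One-step descent with inexact gradient: with learning rate `1/(2L)`,
`𝓛 w − 𝓛 w' ≥ (3/(16L))·‖∇𝓛 w‖² − (7/(8L))·‖g − ∇𝓛 w‖²`. -/
theorem one_step_descent_inexact_gradient
    {E : Type*} [NormedAddCommGroup E] [InnerProductSpace ℝ E] [CompleteSpace E]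
    (𝓛 : E → ℝ) (hdiff : Differentiable ℝ 𝓛)
    (L : NNReal) (hL : 0 < L) (hlip : LipschitzWith L (gradient 𝓛))
    (w g : E) (w' : E) (hw' : w' = w - (1 / (2 * (L : ℝ))) • g) :
    𝓛 w - 𝓛 w' ≥ 3 / (16 * (L : ℝ)) * ‖gradient 𝓛 w‖ ^ 2
      - 7 / (8 * (L : ℝ)) * ‖g - gradient 𝓛 w‖ ^ 2 := by
  have hLpos : (0 : ℝ) < L := hL
  obtain ⟨η, hη⟩ : ∃ η : ℝ, η = 1 / (2 * (L : ℝ)) := ⟨_, rfl⟩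
  rw [← hη] at hw'
  have hηpos : 0 < η := by rw [hη]; positivity
  have key := taylor_bound_of_lip_grad 𝓛 hdiff L hlip w w'
  have hwd : w' - w = -(η • g) := by rw [hw']; abel
  have hinner : (inner ℝ (gradient 𝓛 w) (w' - w) : ℝ) = -(η * inner ℝ (gradient 𝓛 w) g) := by
    rw [hwd, inner_neg_right, real_inner_smul_right]
  have hnorm : ‖w' - w‖ ^ 2 = η ^ 2 * ‖g‖ ^ 2 := by
    rw [hwd, norm_neg, norm_smul, mul_pow]
    simp [abs_of_pos hηpos]
  have key2 : 𝓛 w - 𝓛 w' ≥ η * inner ℝ (gradient 𝓛 w) g - (L : ℝ) * (η ^ 2 * ‖g‖ ^ 2) := by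
    have h2 := (abs_le.mp key).2
    rw [hinner, hnorm] at h2
    linarith
  set v := gradient 𝓛 w with hv
  set e := g - v with he
  have hg : g = v + e := by rw [he]; abel
  have hig : (inner ℝ v g : ℝ) = ‖v‖ ^ 2 + inner ℝ v e := by
    rw [hg, inner_add_right, real_inner_self_eq_norm_sq]
  have hng : ‖g‖ ^ 2 = ‖v‖ ^ 2 + 2 * inner ℝ v e + ‖e‖ ^ 2 := by
    rw [hg, norm_add_sq_real]
  rw [hig, hng] at key2
  have hη2 : (L : ℝ) * η ^ 2 = η / 2 := by
    rw [pow_two, ← mul_assoc, hη]; field_simp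
  have expand : η * (‖v‖ ^ 2 + inner ℝ v e)
      - (L : ℝ) * (η ^ 2 * (‖v‖ ^ 2 + 2 * inner ℝ v e + ‖e‖ ^ 2))
      = η / 2 * ‖v‖ ^ 2 - η / 2 * ‖e‖ ^ 2 := by
    rw [← mul_assoc, hη2]; ring
  rw [expand] at key2
  have hnv : 0 ≤ ‖v‖ ^ 2 := by positivity
  have hne : 0 ≤ ‖e‖ ^ 2 := by positivity
  have c1 : 3 / (16 * (L : ℝ)) ≤ η / 2 := by
    rw [hη, div_le_div_iff₀ (by positivity) (by positivity)]
    nlinarith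
  have c2 : η / 2 ≤ 7 / (8 * (L : ℝ)) := by
    rw [hη, div_le_div_iff₀ (by positivity) (by positivity)]
    nlinarith
  have t1 := mul_le_mul_of_nonneg_right c1 hnv
  have t2 := mul_le_mul_of_nonneg_right c2 hne
  linarith
end

section
/- (Telescoped convergence bound; deterministic core of Proposition 5.7.) Let E be a real Hilbert space, let 𝓛 : E → ℝ be differentiable with L-Lipschitz gradient for some L > 0, and suppose 𝓛(w) ≥ 0 for all w ∈ E. Let (wᵗ)_{t≥0} in E and (gᵗ)_{t≥0} in E satisfy w^{t+1} = wᵗ − (1/(2L))·gᵗ for all t. Then for every T ∈ ℕ, 𝓛(w⁰) ≥ Σ_{t=0}^{T−1} [ (3/(16L))·‖∇𝓛(wᵗ)‖² − (7/(8L))·‖gᵗ − ∇𝓛(wᵗ)‖² ]. -/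
open MeasureTheory Finset RealInnerProductSpace

section aux

variable {E : Type*} [NormedAddCommGroup E] [InnerProductSpace ℝ E] [CompleteSpace E]

lemma inner_gradient_eq_fderiv (𝓛 : E → ℝ) (y v : E) :
    ⟪gradient 𝓛 y, v⟫ = fderiv ℝ 𝓛 y v := by
  simp [gradient, InnerProductSpace.toDual_symm_apply]

/-- Descent lemma. -/
lemma descent_lemma (𝓛 : E → ℝ) (hdiff : Differentiable ℝ 𝓛)
    (L : NNReal) (hlip : LipschitzWith L (gradient 𝓛)) (x v : E) :
    𝓛 (x + v) ≤ 𝓛 x + ⟪gradient 𝓛 x, v⟫ + (L : ℝ) / 2 * ‖v‖ ^ 2 := by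
  set φ : ℝ → ℝ := fun s =>
    𝓛 (x + s • v) - s * ⟪gradient 𝓛 x, v⟫ - (L : ℝ) / 2 * s ^ 2 * ‖v‖ ^ 2 with hφdef
  have hline : ∀ s : ℝ, HasDerivAt (fun s : ℝ => x + s • v) v s := by
    intro s
    simpa using ((hasDerivAt_id s).smul_const v).const_add x
  have hφ : ∀ s : ℝ, HasDerivAt φ
      (⟪gradient 𝓛 (x + s • v) - gradient 𝓛 x, v⟫ - (L : ℝ) * s * ‖v‖ ^ 2) s := by
    intro s
    have h1 : HasDerivAt (fun s : ℝ => 𝓛 (x + s • v))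
        (⟪gradient 𝓛 (x + s • v), v⟫) s := by
      have := (hdiff (x + s • v)).hasFDerivAt.comp_hasDerivAt s (hline s)
      rwa [inner_gradient_eq_fderiv]
    have h2 : HasDerivAt (fun s : ℝ => s * ⟪gradient 𝓛 x, v⟫)
        (⟪gradient 𝓛 x, v⟫) s := by
      simpa using (hasDerivAt_id s).mul_const (⟪gradient 𝓛 x, v⟫)
    have h3 : HasDerivAt (fun s : ℝ => (L : ℝ) / 2 * s ^ 2 * ‖v‖ ^ 2)
        ((L : ℝ) * s * ‖v‖ ^ 2) s := by
      have := (((hasDerivAt_pow 2 s).const_mul ((L : ℝ) / 2)).mul_const (‖v‖ ^ 2))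
      refine this.congr_deriv ?_
      ring
    have := (h1.sub h2).sub h3
    refine this.congr_deriv ?_
    rw [inner_sub_left]
    try ring
  have hmono : AntitoneOn φ (Set.Icc (0 : ℝ) 1) := by
    apply antitoneOn_of_deriv_nonpos (convex_Icc 0 1)
    · exact fun s _ => ((hφ s).continuousAt).continuousWithinAt
    · exact fun s hs => ((hφ s).differentiableAt).differentiableWithinAt
    · intro s hs
      rw [(hφ s).deriv]
      rw [interior_Icc] at hs
      have hs0 : (0 : ℝ) ≤ s := le_of_lt hs.1
      have hcs : ⟪gradient 𝓛 (x + s • v) - gradient 𝓛 x, v⟫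
          ≤ ‖gradient 𝓛 (x + s • v) - gradient 𝓛 x‖ * ‖v‖ := real_inner_le_norm _ _
      have hlb : ‖gradient 𝓛 (x + s • v) - gradient 𝓛 x‖ ≤ (L : ℝ) * (s * ‖v‖) := by
        have := hlip.dist_le_mul (x + s • v) x
        rw [dist_eq_norm] at this
        simpa [norm_smul, abs_of_nonneg hs0] using this
      have hv : (0 : ℝ) ≤ ‖v‖ := norm_nonneg _
      nlinarith [mul_le_mul_of_nonneg_right hlb hv]
  have h01 : φ 1 ≤ φ 0 := hmono (by norm_num) (by norm_num) (by norm_num)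
  simp only [hφdef, one_smul, zero_smul, add_zero, one_pow, one_mul, zero_mul,
    mul_zero, sub_zero] at h01
  linarith [h01]

lemma real_step_ineq (l A B c : ℝ) (hl : 0 < l) (hc : -c ≤ A * B)
    (hA : 0 ≤ A) (hB : 0 ≤ B) :
    -(1 / (2 * l)) * (A ^ 2 + c) + l / 2 * ((1 / (2 * l)) ^ 2 * (A ^ 2 + 2 * c + B ^ 2))
      ≤ -(3 / (16 * l)) * A ^ 2 + 7 / (8 * l) * B ^ 2 := by
  have h1 : A * B ≤ A ^ 2 / 4 + B ^ 2 := by nlinarith [sq_nonneg (A - 2 * B)]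
  have key : -c ≤ 3 / 4 * A ^ 2 + 3 * B ^ 2 := by nlinarith
  have hl' : l ≠ 0 := ne_of_gt hl
  have expand : -(3 / (16 * l)) * A ^ 2 + 7 / (8 * l) * B ^ 2
      - (-(1 / (2 * l)) * (A ^ 2 + c) + l / 2 * ((1 / (2 * l)) ^ 2 * (A ^ 2 + 2 * c + B ^ 2)))
      = (1 / (4 * l)) * (c + 3 / 4 * A ^ 2 + 3 * B ^ 2) := by
    field_simp
    ring
  have hpos : (0:ℝ) < 1 / (4 * l) := by positivity
  nlinarith [mul_le_mul_of_nonneg_left (by linarith : (0:ℝ) ≤ c + 3 / 4 * A ^ 2 + 3 * B ^ 2) hpos.le]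

end aux

/-- Telescoped convergence bound: if `𝓛 ≥ 0` has `L`-Lipschitz gradient and
`wᵗ⁺¹ = wᵗ − (1/(2L))·gᵗ`, then
`𝓛(w⁰) ≥ Σ_{t<T} [(3/(16L))·‖∇𝓛(wᵗ)‖² − (7/(8L))·‖gᵗ − ∇𝓛(wᵗ)‖²]`. -/
theorem telescoped_convergence_bound
    {E : Type*} [NormedAddCommGroup E] [InnerProductSpace ℝ E] [CompleteSpace E]
    (𝓛 : E → ℝ) (hdiff : Differentiable ℝ 𝓛)
    (L : NNReal) (hL : 0 < L) (hlip : LipschitzWith L (gradient 𝓛))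
    (hnonneg : ∀ w : E, 0 ≤ 𝓛 w)
    (w g : ℕ → E) (hupd : ∀ t : ℕ, w (t + 1) = w t - (1 / (2 * (L : ℝ))) • g t)
    (T : ℕ) :
    𝓛 (w 0) ≥ ∑ t ∈ Finset.range T,
      (3 / (16 * (L : ℝ)) * ‖gradient 𝓛 (w t)‖ ^ 2
        - 7 / (8 * (L : ℝ)) * ‖g t - gradient 𝓛 (w t)‖ ^ 2) := by
  have hL' : (0 : ℝ) < (L : ℝ) := by exact_mod_cast hL
  have hstep : ∀ t : ℕ, 𝓛 (w (t + 1)) ≤ 𝓛 (w t)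
      - (3 / (16 * (L : ℝ)) * ‖gradient 𝓛 (w t)‖ ^ 2
        - 7 / (8 * (L : ℝ)) * ‖g t - gradient 𝓛 (w t)‖ ^ 2) := by
    intro t
    set x := w t
    set Gx := gradient 𝓛 x with hG
    set e := g t - Gx with he
    have hg : g t = Gx + e := by simp [he]
    have hv : w (t + 1) = x + (-(1 / (2 * (L : ℝ))) • g t) := by
      rw [hupd t]; module
    have hdl := descent_lemma 𝓛 hdiff L hlip x (-(1 / (2 * (L : ℝ))) • g t)
    rw [← hv] at hdl
    have hinner : ⟪Gx, -(1 / (2 * (L : ℝ))) • g t⟫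
        = -(1 / (2 * (L : ℝ))) * (‖Gx‖ ^ 2 + ⟪Gx, e⟫) := by
      rw [real_inner_smul_right, hg, inner_add_right, real_inner_self_eq_norm_sq]
    have hnorm : ‖-(1 / (2 * (L : ℝ))) • g t‖ ^ 2
        = (1 / (2 * (L : ℝ))) ^ 2 * (‖Gx‖ ^ 2 + 2 * ⟪Gx, e⟫ + ‖e‖ ^ 2) := by
      rw [norm_smul, mul_pow, hg, @norm_add_sq_real]
      have : |(-(1 / (2 * (L : ℝ))))| = 1 / (2 * (L : ℝ)) := by
        rw [abs_neg, abs_of_pos (by positivity)]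
      rw [Real.norm_eq_abs, this]
      try ring
    rw [hinner, hnorm] at hdl
    have hkey := real_step_ineq (L : ℝ) ‖Gx‖ ‖e‖ ⟪Gx, e⟫ hL'
      (by simpa using real_inner_le_norm Gx (-e)) (norm_nonneg _) (norm_nonneg _)
    calc 𝓛 (w (t + 1)) ≤ 𝓛 x + -(1 / (2 * (L : ℝ))) * (‖Gx‖ ^ 2 + ⟪Gx, e⟫)
          + (L : ℝ) / 2 * ((1 / (2 * (L : ℝ))) ^ 2 * (‖Gx‖ ^ 2 + 2 * ⟪Gx, e⟫ + ‖e‖ ^ 2)) := hdl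
      _ ≤ 𝓛 x + (-(3 / (16 * (L : ℝ))) * ‖Gx‖ ^ 2 + 7 / (8 * (L : ℝ)) * ‖e‖ ^ 2) := by
          linarith
      _ = 𝓛 x - (3 / (16 * (L : ℝ)) * ‖Gx‖ ^ 2 - 7 / (8 * (L : ℝ)) * ‖e‖ ^ 2) := by ring
  have htel : ∀ T : ℕ, (∑ t ∈ Finset.range T,
      (3 / (16 * (L : ℝ)) * ‖gradient 𝓛 (w t)‖ ^ 2
        - 7 / (8 * (L : ℝ)) * ‖g t - gradient 𝓛 (w t)‖ ^ 2)) ≤ 𝓛 (w 0) - 𝓛 (w T) := by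
    intro T
    induction T with
    | zero => simp
    | succ n ih =>
        rw [Finset.sum_range_succ]
        have := hstep n
        linarith
  have := htel T
  have := hnonneg (w T)
  linarith
end

section
/- (Lemma C.1: resilience applied to random inputs.) Let n, f be natural numbers with 1 ≤ n − f, let λ > 0 and ρ ≥ 0, and let A : (Fin n → E) → E be a measurable map satisfying the (f, λ)-resilience inequality. Let S ⊆ Fin n with |S| = n − f, and let x₁, …, xₙ : Ω → E be random vectors with finite second moments such that 𝔼[‖xᵢ − xᵢ'‖²] ≤ ρ² for all i, i' ∈ S. Then 𝔼[ ‖A(x₁, …, xₙ) − x̄_S‖² ] ≤ 4·λ²·((n − f − 1)²/(n − f))·ρ², where x̄_S(ω) = (1/(n−f)) Σ_{i∈S} xᵢ(ω). -/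
/-!
Pointwise, resilience bounds the error by `λ` times the diameter of the honest inputs. The
squared diameter is at most four times the sum of squared deviations from the honest average,
which is `2/m` times the sum of all `m²` squared pairwise distances (`m = n - f`). In
expectation the `m (m - 1)` off-diagonal pairs contribute at most `ρ²` each, so the error is at
most `2 λ² (m - 1) ρ² ≤ 4 λ² (m - 1)² ρ² / m`.
-/

open MeasureTheory Finset

section PairwiseDistances

variable {E ι : Type*} [SeminormedAddCommGroup E] [InnerProductSpace ℝ E]

theorem sum_product_norm_sub_sq (S : Finset ι) (y : ι → E) :
    ∑ p ∈ S ×ˢ S, ‖y p.1 - y p.2‖ ^ 2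
      = 2 * #S * ∑ i ∈ S, ‖y i‖ ^ 2 - 2 * ‖∑ i ∈ S, y i‖ ^ 2 := by
  rw [sum_product, ← real_inner_self_eq_norm_sq (∑ i ∈ S, y i), sum_inner]
  simp only [norm_sub_sq_real, sum_add_distrib, sum_sub_distrib, sum_const, ← mul_sum,
    nsmul_eq_mul, ← inner_sum]
  ring

theorem sum_sub_centroid_eq_zero (S : Finset ι) (y : ι → E) :
    ∑ i ∈ S, (y i - (#S : ℝ)⁻¹ • ∑ j ∈ S, y j) = 0 := by
  rcases S.eq_empty_or_nonempty with rfl | hS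
  · simp
  rw [sum_sub_distrib, sum_const, ← Nat.cast_smul_eq_nsmul ℝ,
    smul_inv_smul₀ (by positivity), sub_self]

theorem sum_product_norm_sub_sq_eq_sum_norm_sub_centroid_sq (S : Finset ι) (y : ι → E) :
    ∑ p ∈ S ×ˢ S, ‖y p.1 - y p.2‖ ^ 2
      = 2 * #S * ∑ i ∈ S, ‖y i - (#S : ℝ)⁻¹ • ∑ j ∈ S, y j‖ ^ 2 := by
  have h := sum_product_norm_sub_sq S (fun i => y i - (#S : ℝ)⁻¹ • ∑ j ∈ S, y j)
  simp only [sub_sub_sub_cancel_right] at h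
  rwa [sum_sub_centroid_eq_zero, norm_zero, zero_pow two_ne_zero, mul_zero, sub_zero] at h

theorem sq_sup'_norm_sub_le (S : Finset ι) (hS : S.Nonempty) (y : ι → E) :
    (S ×ˢ S).sup' (hS.product hS) (fun p => ‖y p.1 - y p.2‖) ^ 2
      ≤ 2 / #S * ∑ p ∈ S ×ˢ S, ‖y p.1 - y p.2‖ ^ 2 := by
  obtain ⟨⟨i, j⟩, hij, hsup⟩ := exists_mem_eq_sup' (hS.product hS) (fun p => ‖y p.1 - y p.2‖)
  obtain ⟨hi, hj⟩ := mem_product.1 hij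
  set c : E := (#S : ℝ)⁻¹ • ∑ j ∈ S, y j
  set T : ℝ := ∑ k ∈ S, ‖y k - c‖ ^ 2
  have hTi : ‖y i - c‖ ^ 2 ≤ T := single_le_sum (fun k _ => sq_nonneg ‖y k - c‖) hi
  have hTj : ‖y j - c‖ ^ 2 ≤ T := single_le_sum (fun k _ => sq_nonneg ‖y k - c‖) hj
  have hpar := parallelogram_law_with_norm ℝ (y i - c) (y j - c)
  rw [sub_sub_sub_cancel_right] at hpar
  have hcard : (0 : ℝ) < #S := by exact_mod_cast hS.card_pos
  calc (S ×ˢ S).sup' (hS.product hS) (fun p => ‖y p.1 - y p.2‖) ^ 2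
      = ‖y i - y j‖ ^ 2 := by rw [hsup]
    _ ≤ 2 * (‖y i - c‖ ^ 2 + ‖y j - c‖ ^ 2) := by linarith [sq_nonneg ‖y i - c + (y j - c)‖]
    _ ≤ 2 / #S * (2 * #S * T) := by field_simp; linarith
    _ = 2 / #S * ∑ p ∈ S ×ˢ S, ‖y p.1 - y p.2‖ ^ 2 := by
      rw [sum_product_norm_sub_sq_eq_sum_norm_sub_centroid_sq]

theorem sq_le_of_le_mul_sup'_norm_sub {S : Finset ι} (hS : S.Nonempty) (y : ι → E)
    {r lam : ℝ} (hr : 0 ≤ r)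
    (h : r ≤ lam * (S ×ˢ S).sup' (hS.product hS) (fun p => ‖y p.1 - y p.2‖)) :
    r ^ 2 ≤ lam ^ 2 * (2 / #S * ∑ p ∈ S ×ˢ S, ‖y p.1 - y p.2‖ ^ 2) := by
  have hsq := pow_le_pow_left₀ hr h 2
  rw [mul_pow] at hsq
  exact hsq.trans (mul_le_mul_of_nonneg_left (sq_sup'_norm_sub_le S hS y) (sq_nonneg lam))

end PairwiseDistances

theorem sum_product_le_card_mul_card_sub_one_mul {ι : Type*} (S : Finset ι) (g : ι → ι → ℝ)
    (c : ℝ) (hdiag : ∀ i ∈ S, g i i = 0) (hoff : ∀ i ∈ S, ∀ j ∈ S, i ≠ j → g i j ≤ c) :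
    ∑ p ∈ S ×ˢ S, g p.1 p.2 ≤ #S * (#S - 1 : ℝ) * c := by
  classical
  have hrow : ∀ i ∈ S, ∑ j ∈ S, g i j ≤ (#S - 1 : ℝ) * c := fun i hi => by
    rw [← sum_erase S (hdiag i hi)]
    have h := sum_le_card_nsmul (S.erase i) (g i) c fun j hj =>
      hoff i hi j (mem_of_mem_erase hj) (ne_of_mem_erase hj).symm
    rwa [card_erase_of_mem hi, nsmul_eq_mul, Nat.cast_sub (one_le_card.2 ⟨i, hi⟩),
      Nat.cast_one] at h
  calc ∑ p ∈ S ×ˢ S, g p.1 p.2 = ∑ i ∈ S, ∑ j ∈ S, g i j := sum_product S S _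
    _ ≤ ∑ _i ∈ S, (#S - 1 : ℝ) * c := sum_le_sum hrow
    _ = #S * (#S - 1 : ℝ) * c := by rw [sum_const, nsmul_eq_mul, mul_assoc]

theorem two_mul_natCast_sub_one_le (m : ℕ) : 2 * ((m : ℝ) - 1) ≤ 4 * ((m : ℝ) - 1) ^ 2 / m := by
  rcases m with _ | _ | m
  · norm_num
  · norm_num
  rw [le_div_iff₀ (by positivity)]
  push_cast
  nlinarith [(m.cast_nonneg : (0 : ℝ) ≤ m)]

theorem resilient_agr_random_inputs_general
    {E : Type*} [NormedAddCommGroup E] [InnerProductSpace ℝ E]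
    {Ω : Type*} [MeasurableSpace Ω] (P : Measure Ω)
    (n f : ℕ) (hnf : 1 ≤ n - f) (lam ρ : ℝ)
    (A : (Fin n → E) → E)
    (hres : ∀ (y : Fin n → E) (S : Finset (Fin n)), S.card = n - f →
      ∀ hS : S.Nonempty,
      ‖A y - (((n - f : ℕ) : ℝ))⁻¹ • ∑ i ∈ S, y i‖ ≤
        lam * (S ×ˢ S).sup' (hS.product hS) (fun p => ‖y p.1 - y p.2‖))
    (S : Finset (Fin n)) (hS : S.card = n - f)
    (x : Fin n → Ω → E) (hx : ∀ i : Fin n, MemLp (x i) 2 P)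
    (hpair : ∀ i ∈ S, ∀ i' ∈ S, ∫ ω, ‖x i ω - x i' ω‖ ^ 2 ∂P ≤ ρ ^ 2) :
    ∫ ω, ‖A (fun i => x i ω) - (((n - f : ℕ) : ℝ))⁻¹ • ∑ i ∈ S, x i ω‖ ^ 2 ∂P ≤
      4 * lam ^ 2 * ((((n - f : ℕ) : ℝ) - 1) ^ 2 / ((n - f : ℕ) : ℝ)) * ρ ^ 2 := by
  have hSne : S.Nonempty := card_pos.1 (hS ▸ hnf)
  have hdist_int : ∀ i j, Integrable (fun ω => ‖x i ω - x j ω‖ ^ 2) P := fun i j =>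
    ((hx i).sub (hx j)).norm.integrable_sq
  have hres_ω := fun ω => hres (fun i => x i ω) S hS hSne
  rw [← hS] at hres_ω ⊢
  have hpointwise : ∀ ω, ‖A (fun i => x i ω) - (#S : ℝ)⁻¹ • ∑ i ∈ S, x i ω‖ ^ 2
      ≤ lam ^ 2 * (2 / #S * ∑ p ∈ S ×ˢ S, ‖x p.1 ω - x p.2 ω‖ ^ 2) := fun ω =>
    sq_le_of_le_mul_sup'_norm_sub hSne (fun i => x i ω) (norm_nonneg _) (hres_ω ω)
  calc ∫ ω, ‖A (fun i => x i ω) - (#S : ℝ)⁻¹ • ∑ i ∈ S, x i ω‖ ^ 2 ∂P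
      ≤ ∫ ω, lam ^ 2 * (2 / #S * ∑ p ∈ S ×ˢ S, ‖x p.1 ω - x p.2 ω‖ ^ 2) ∂P :=
        integral_mono_of_nonneg (ae_of_all _ fun _ => sq_nonneg _)
          (((integrable_finsetSum _ fun p _ => hdist_int p.1 p.2).const_mul _).const_mul _)
          (ae_of_all _ hpointwise)
    _ = lam ^ 2 * (2 / #S * ∑ p ∈ S ×ˢ S, ∫ ω, ‖x p.1 ω - x p.2 ω‖ ^ 2 ∂P) := by
      rw [integral_const_mul, integral_const_mul,
        integral_finsetSum _ fun p _ => hdist_int p.1 p.2]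
    _ ≤ lam ^ 2 * (2 / #S * (#S * (#S - 1 : ℝ) * ρ ^ 2)) := by
      gcongr
      exact sum_product_le_card_mul_card_sub_one_mul S _ _ (by simp)
        fun i hi j hj _ => hpair i hi j hj
    _ = 2 * ((#S : ℝ) - 1) * lam ^ 2 * ρ ^ 2 := by
      field_simp [(Nat.cast_pos.2 hSne.card_pos : (0 : ℝ) < #S).ne']
    _ ≤ 4 * ((#S : ℝ) - 1) ^ 2 / #S * lam ^ 2 * ρ ^ 2 := by
      gcongr; exact two_mul_natCast_sub_one_le #S
    _ = 4 * lam ^ 2 * (((#S : ℝ) - 1) ^ 2 / #S) * ρ ^ 2 := by ring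

/-- Lemma C.1: an `(f, λ)`-resilient aggregation rule applied to random inputs whose
pairwise second moments are bounded by `ρ²` deviates from the honest average by at most
`4·λ²·((n−f−1)²/(n−f))·ρ²` in second moment. -/
theorem resilient_agr_random_inputs
    {E : Type*} [NormedAddCommGroup E] [InnerProductSpace ℝ E] [CompleteSpace E]
    [MeasurableSpace E] [BorelSpace E]
    {Ω : Type*} [MeasurableSpace Ω] (P : Measure Ω) [IsProbabilityMeasure P]
    (n f : ℕ) (hnf : 1 ≤ n - f) (lam ρ : ℝ) (hlam : 0 < lam) (hρ : 0 ≤ ρ)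
    (A : (Fin n → E) → E) (hAmeas : Measurable A)
    (hres : ∀ (y : Fin n → E) (S : Finset (Fin n)), S.card = n - f →
      ∀ hS : S.Nonempty,
      ‖A y - (((n - f : ℕ) : ℝ))⁻¹ • ∑ i ∈ S, y i‖ ≤
        lam * (S ×ˢ S).sup' (hS.product hS) (fun p => ‖y p.1 - y p.2‖))
    (S : Finset (Fin n)) (hS : S.card = n - f)
    (x : Fin n → Ω → E) (hx : ∀ i : Fin n, MemLp (x i) 2 P)
    (hpair : ∀ i ∈ S, ∀ i' ∈ S, ∫ ω, ‖x i ω - x i' ω‖ ^ 2 ∂P ≤ ρ ^ 2) :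
    ∫ ω, ‖A (fun i => x i ω) - (((n - f : ℕ) : ℝ))⁻¹ • ∑ i ∈ S, x i ω‖ ^ 2 ∂P ≤
      4 * lam ^ 2 * ((((n - f : ℕ) : ℝ) - 1) ^ 2 / ((n - f : ℕ) : ℝ)) * ρ ^ 2 :=
  resilient_agr_random_inputs_general P n f hnf lam ρ A hres S hS x hx hpair
end

section
/- (Deviation of a point from the mean via pairwise distances.) Let E be a real inner product space, let S be a nonempty finite set of indices, let x : ι → E, and let x̄_S be the mean of x over S. Then for every i ∈ S: ‖xᵢ − x̄_S‖² ≤ ((|S| − 1)/|S|²) · Σ_{i' ∈ S, i' ≠ i} ‖xᵢ − xᵢ'‖². -/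
open Finset

/-- Deviation of a point from the mean via pairwise distances:
`‖xᵢ − x̄_S‖² ≤ ((|S|−1)/|S|²) · Σ_{i'∈S, i'≠i} ‖xᵢ − xᵢ'‖²`. -/
theorem deviation_from_mean_pairwise
    {E : Type*} [NormedAddCommGroup E] [InnerProductSpace ℝ E]
    {ι : Type*} [DecidableEq ι] (S : Finset ι) (hS : S.Nonempty)
    (x : ι → E) (i : ι) (hi : i ∈ S) :
    ‖x i - ((S.card : ℝ))⁻¹ • ∑ j ∈ S, x j‖ ^ 2 ≤
      (((S.card : ℝ) - 1) / (S.card : ℝ) ^ 2) * ∑ i' ∈ S.erase i, ‖x i - x i'‖ ^ 2 := by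
  have hn : (0 : ℝ) < S.card := by exact_mod_cast Finset.card_pos.mpr hS
  have hrw : x i - ((S.card : ℝ))⁻¹ • ∑ j ∈ S, x j
      = ((S.card : ℝ))⁻¹ • ∑ j ∈ S.erase i, (x i - x j) := by
    have h0 : ∑ j ∈ S.erase i, (x i - x j) = ∑ j ∈ S, (x i - x j) :=
      Finset.sum_erase S (sub_self (x i))
    rw [h0, Finset.sum_sub_distrib, Finset.sum_const,
      smul_sub, ← Nat.cast_smul_eq_nsmul ℝ, smul_smul, inv_mul_cancel₀ hn.ne', one_smul]
  rw [hrw, norm_smul, mul_pow, norm_inv, Real.norm_natCast]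
  have h1 : ‖∑ j ∈ S.erase i, (x i - x j)‖ ^ 2 ≤
      ((S.erase i).card : ℝ) * ∑ j ∈ S.erase i, ‖x i - x j‖ ^ 2 := by
    calc ‖∑ j ∈ S.erase i, (x i - x j)‖ ^ 2
        ≤ (∑ j ∈ S.erase i, ‖x i - x j‖) ^ 2 := by
          apply pow_le_pow_left₀ (norm_nonneg _) (norm_sum_le _ _)
      _ ≤ _ := sq_sum_le_card_mul_sum_sq
  have hcard : ((S.erase i).card : ℝ) = (S.card : ℝ) - 1 := by
    rw [Finset.card_erase_of_mem hi]
    have h1 : 1 ≤ S.card := Finset.card_pos.mpr hS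
    push_cast [Nat.cast_sub h1]
    ring
  rw [hcard] at h1
  calc ((S.card : ℝ))⁻¹ ^ 2 * ‖∑ j ∈ S.erase i, (x i - x j)‖ ^ 2
      ≤ ((S.card : ℝ))⁻¹ ^ 2 * (((S.card : ℝ) - 1) * ∑ j ∈ S.erase i, ‖x i - x j‖ ^ 2) := by
        apply mul_le_mul_of_nonneg_left h1 (by positivity)
    _ = (((S.card : ℝ) - 1) / (S.card : ℝ) ^ 2) * ∑ i' ∈ S.erase i, ‖x i - x i'‖ ^ 2 := by
        field_simp
end

section
/- (Diameter bounded by the sum of pairwise squared distances.) Let E be a real inner product space, let S be a nonempty finite set of indices, and let x : ι → E. Then max_{i, i' ∈ S} ‖xᵢ − xᵢ'‖² ≤ (4(|S| − 1)/|S|²) · Σ_{i, i' ∈ S, i ≠ i'} ‖xᵢ − xᵢ'‖², where the sum runs over ordered pairs of distinct indices in S. -/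
open Finset

/-- Diameter bounded by the sum of pairwise squared distances:
`max_{i,i'∈S} ‖xᵢ − xᵢ'‖² ≤ (4(|S|−1)/|S|²) · Σ_{i≠i' ∈ S} ‖xᵢ − xᵢ'‖²`
(the sum is over ordered pairs of distinct indices in `S`). -/
theorem diameter_le_sum_pairwise_sq
    {E : Type*} [NormedAddCommGroup E] [InnerProductSpace ℝ E]
    {ι : Type*} [DecidableEq ι] (S : Finset ι) (hS : S.Nonempty) (x : ι → E) :
    (S ×ˢ S).sup' (hS.product hS) (fun p => ‖x p.1 - x p.2‖ ^ 2) ≤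
      (4 * ((S.card : ℝ) - 1) / (S.card : ℝ) ^ 2) *
        ∑ p ∈ (S ×ˢ S).filter (fun p => p.1 ≠ p.2), ‖x p.1 - x p.2‖ ^ 2 := by
  apply Finset.sup'_le
  rintro ⟨a, b⟩ hmem
  rw [Finset.mem_product] at hmem
  obtain ⟨ha, hb⟩ := hmem
  set T := ∑ p ∈ (S ×ˢ S).filter (fun p => p.1 ≠ p.2), ‖x p.1 - x p.2‖ ^ 2 with hT
  have hT0 : 0 ≤ T := Finset.sum_nonneg fun p _ => by positivity
  have hn1 : (1 : ℝ) ≤ (S.card : ℝ) := by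
    exact_mod_cast Finset.card_pos.mpr hS
  by_cases hab : a = b
  · subst hab
    simp only [sub_self, norm_zero]
    have h1 : (0:ℝ) ≤ 4 * ((S.card : ℝ) - 1) / (S.card : ℝ) ^ 2 := by
      apply div_nonneg
      · linarith
      · positivity
    nlinarith [mul_nonneg h1 hT0]
  -- a ≠ b
  have hn2 : (2 : ℝ) ≤ (S.card : ℝ) := by
    have : 1 < S.card := Finset.one_lt_card.mpr ⟨a, ha, b, hb, hab⟩
    exact_mod_cast this
  have key : ∀ k, ‖x a - x b‖ ^ 2 ≤ 2 * ‖x a - x k‖ ^ 2 + 2 * ‖x b - x k‖ ^ 2 := by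
    intro k
    have h1 : ‖x a - x b‖ ≤ ‖x a - x k‖ + ‖x k - x b‖ :=
      norm_sub_le_norm_sub_add_norm_sub _ _ _
    have h2 : ‖x k - x b‖ = ‖x b - x k‖ := norm_sub_rev _ _
    rw [h2] at h1
    have h3 : ‖x a - x b‖ ^ 2 ≤ (‖x a - x k‖ + ‖x b - x k‖) ^ 2 :=
      pow_le_pow_left₀ (norm_nonneg _) h1 2
    nlinarith [sq_nonneg (‖x a - x k‖ - ‖x b - x k‖)]
  have hB : (S.card : ℝ) * ‖x a - x b‖ ^ 2 ≤
      2 * (∑ j ∈ S, ‖x a - x j‖ ^ 2) + 2 * (∑ j ∈ S, ‖x b - x j‖ ^ 2) := by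
    have h := Finset.sum_le_sum (fun k (_ : k ∈ S) => key k)
    simpa [Finset.sum_const, nsmul_eq_mul, Finset.sum_add_distrib, Finset.mul_sum] using h
  -- rewrite T as double sum
  have hTsum : T = ∑ i ∈ S, ∑ j ∈ S, ‖x i - x j‖ ^ 2 * (if i ≠ j then 1 else 0) := by
    rw [hT, Finset.sum_filter, Finset.sum_product]
    congr 1
    ext i
    refine Finset.sum_congr rfl fun j _ => ?_
    by_cases h : i = j <;> simp [h]
  have hg : ∀ i, (∑ j ∈ S, ‖x i - x j‖ ^ 2 * (if i ≠ j then 1 else 0)) =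
      ∑ j ∈ S, ‖x i - x j‖ ^ 2 := by
    intro i
    refine Finset.sum_congr rfl fun j _ => ?_
    by_cases h : i = j
    · subst h; simp
    · simp [h]
  have hC : (∑ j ∈ S, ‖x a - x j‖ ^ 2) + (∑ j ∈ S, ‖x b - x j‖ ^ 2) ≤ T := by
    have hsub : ({a, b} : Finset ι) ⊆ S := by
      intro i hi
      rcases Finset.mem_insert.mp hi with h | h
      · subst h; exact ha
      · rw [Finset.mem_singleton] at h; subst h; exact hb
    have hpair : ∑ i ∈ ({a, b} : Finset ι), (∑ j ∈ S, ‖x i - x j‖ ^ 2) ≤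
        ∑ i ∈ S, (∑ j ∈ S, ‖x i - x j‖ ^ 2) :=
      Finset.sum_le_sum_of_subset_of_nonneg hsub
        (fun i _ _ => Finset.sum_nonneg fun j _ => by positivity)
    rw [Finset.sum_pair hab] at hpair
    calc (∑ j ∈ S, ‖x a - x j‖ ^ 2) + (∑ j ∈ S, ‖x b - x j‖ ^ 2) ≤
        ∑ i ∈ S, (∑ j ∈ S, ‖x i - x j‖ ^ 2) := hpair
      _ = T := by rw [hTsum]; exact Finset.sum_congr rfl fun i _ => (hg i).symm
  have hB' : (S.card : ℝ) * ‖x a - x b‖ ^ 2 ≤ 2 * T := by linarith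
  have hnpos : (0 : ℝ) < (S.card : ℝ) ^ 2 := by positivity
  rw [div_mul_eq_mul_div, le_div_iff₀ hnpos]
  nlinarith [mul_le_mul_of_nonneg_left hB' (by linarith : (0:ℝ) ≤ (S.card : ℝ)),
    sq_nonneg (‖x a - x b‖), hT0, hn2]
end

section
/- (Probability that a Byzantine client survives the score-based selection; inequalities C.85–C.91 in the paper.) Let n, f be natural numbers with f ≤ n and n − f ≥ 1. Let s₁, …, sₙ : Ω → ℝ be real random variables with finite second moments, let H ⊆ Fin n with |H| = n − f, and let b ∈ Fin n with b ∉ H. Let A < C be reals and B, D > 0 reals such that for every h ∈ H, 𝔼[s_h] ≤ A and Var[s_h] ≤ B, while 𝔼[s_b] ≥ C and Var[s_b] ≤ D. Then P( { ω : ∃ I ⊆ Fin n, |I| = n − f ∧ b ∈ I ∧ (∀ i ∈ I, ∀ j ∉ I, s_i(ω) ≤ s_j(ω)) } ) ≤ (n − f + 1)·(√B + √D)² / (C − A)². -/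
open MeasureTheory ProbabilityTheory Finset

/-!
If the Byzantine client `b` is among the `n − f` selected clients, some honest client is left
out, and its score is at least that of `b`. So either `s_b` falls to a threshold `τ` or some
honest `s_h` rises to it. By Chebyshev each of these `n − f + 1` events has probability at most
`B / (τ − A)²` resp. `D / (C − τ)²`, and the threshold `τ` dividing `[A, C]` in the ratio
`√B : √D` makes both equal to `(√B + √D)² / (C − A)²`.
-/

theorem Finset.exists_mem_score_le_of_selected {ι : Type*} {s : ι → ℝ} {H I : Finset ι} {b : ι}
    (hI : #I = #H) (hbI : b ∈ I) (hbH : b ∉ H) (hsel : ∀ i ∈ I, ∀ j ∉ I, s i ≤ s j) :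
    ∃ h ∈ H, s b ≤ s h := by
  classical
  have hcard : #I < #(insert b H) := by rw [card_insert_of_notMem hbH, hI]; omega
  obtain ⟨h, hh, hhI⟩ := exists_mem_notMem_of_card_lt_card hcard
  have hhH : h ∈ H := (mem_insert.mp hh).resolve_left (by rintro rfl; exact hhI hbI)
  exact ⟨h, hhH, hsel b hbI h hhI⟩

namespace ProbabilityTheory

variable {Ω : Type*} [MeasurableSpace Ω] {μ : Measure Ω} [IsFiniteMeasure μ]

theorem measureReal_exists_le_le_add_sum {ι : Type*} (H : Finset ι) (X : Ω → ℝ)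
    (Y : ι → Ω → ℝ) (τ : ℝ) :
    μ.real {ω | ∃ h ∈ H, X ω ≤ Y h ω} ≤
      μ.real {ω | X ω ≤ τ} + ∑ h ∈ H, μ.real {ω | τ ≤ Y h ω} := by
  have hsub : {ω | ∃ h ∈ H, X ω ≤ Y h ω} ⊆ {ω | X ω ≤ τ} ∪ ⋃ h ∈ H, {ω | τ ≤ Y h ω} := by
    rintro ω ⟨h, hh, hXY⟩
    rcases le_total (X ω) τ with hX | hX
    · exact Or.inl hX
    · exact Or.inr (Set.mem_biUnion hh (hX.trans hXY))
  calc μ.real {ω | ∃ h ∈ H, X ω ≤ Y h ω}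
      ≤ μ.real ({ω | X ω ≤ τ} ∪ ⋃ h ∈ H, {ω | τ ≤ Y h ω}) := measureReal_mono hsub
    _ ≤ μ.real {ω | X ω ≤ τ} + μ.real (⋃ h ∈ H, {ω | τ ≤ Y h ω}) := measureReal_union_le _ _
    _ ≤ _ := by gcongr; exact measureReal_biUnion_finset_le _ _

variable {X : Ω → ℝ} {a t v : ℝ}

theorem measureReal_ge_le_div_sq_of_integral_le (hX : MemLp X 2 μ) (hmean : μ[X] ≤ a)
    (hat : a < t) (hvar : variance X μ ≤ v) :
    μ.real {ω | t ≤ X ω} ≤ v / (t - a) ^ 2 := by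
  have hsub : {ω | t ≤ X ω} ⊆ {ω | t - a ≤ |X ω - μ[X]|} := fun ω (hω : t ≤ X ω) =>
    (by linarith : t - a ≤ X ω - μ[X]).trans (le_abs_self _)
  calc μ.real {ω | t ≤ X ω} ≤ μ.real {ω | t - a ≤ |X ω - μ[X]|} := measureReal_mono hsub
    _ ≤ variance X μ / (t - a) ^ 2 := ENNReal.toReal_le_of_le_ofReal
        (div_nonneg (variance_nonneg _ _) (sq_nonneg _))
        (meas_ge_le_variance_div_sq hX (sub_pos.mpr hat))
    _ ≤ v / (t - a) ^ 2 := by gcongr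

theorem measureReal_le_le_div_sq_of_le_integral (hX : MemLp X 2 μ) (hmean : a ≤ μ[X])
    (hta : t < a) (hvar : variance X μ ≤ v) :
    μ.real {ω | X ω ≤ t} ≤ v / (a - t) ^ 2 := by
  have hsub : {ω | X ω ≤ t} ⊆ {ω | a - t ≤ |X ω - μ[X]|} := fun ω (hω : X ω ≤ t) =>
    (by linarith : a - t ≤ -(X ω - μ[X])).trans (neg_le_abs _)
  calc μ.real {ω | X ω ≤ t} ≤ μ.real {ω | a - t ≤ |X ω - μ[X]|} := measureReal_mono hsub
    _ ≤ variance X μ / (a - t) ^ 2 := ENNReal.toReal_le_of_le_ofReal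
        (div_nonneg (variance_nonneg _ _) (sq_nonneg _))
        (meas_ge_le_variance_div_sq hX (sub_pos.mpr hta))
    _ ≤ v / (a - t) ^ 2 := by gcongr

end ProbabilityTheory

noncomputable def balancedThreshold (A B C D : ℝ) : ℝ :=
  (√D * A + √B * C) / (√B + √D)

section balancedThreshold

variable {A B C D : ℝ}

theorem balancedThreshold_sub (hB : 0 < B) (hD : 0 < D) :
    balancedThreshold A B C D - A = √B * (C - A) / (√B + √D) := by
  have : 0 < √B + √D := by positivity
  rw [balancedThreshold]; field_simp; ring

theorem sub_balancedThreshold (hB : 0 < B) (hD : 0 < D) :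
    C - balancedThreshold A B C D = √D * (C - A) / (√B + √D) := by
  have : 0 < √B + √D := by positivity
  rw [balancedThreshold]; field_simp; ring

theorem div_sq_balancedThreshold_sub (hAC : A < C) (hB : 0 < B) (hD : 0 < D) :
    B / (balancedThreshold A B C D - A) ^ 2 = (√B + √D) ^ 2 / (C - A) ^ 2 := by
  have : 0 < √B := by positivity
  have : 0 < √D := by positivity
  have : 0 < C - A := sub_pos.mpr hAC
  rw [balancedThreshold_sub hB hD, div_pow, mul_pow, Real.sq_sqrt hB.le]
  field_simp

theorem div_sq_sub_balancedThreshold (hAC : A < C) (hB : 0 < B) (hD : 0 < D) :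
    D / (C - balancedThreshold A B C D) ^ 2 = (√B + √D) ^ 2 / (C - A) ^ 2 := by
  have : 0 < √B := by positivity
  have : 0 < √D := by positivity
  have : 0 < C - A := sub_pos.mpr hAC
  rw [sub_balancedThreshold hB hD, div_pow, mul_pow, Real.sq_sqrt hD.le]
  field_simp

end balancedThreshold

theorem byzantine_survival_probability_bound_general
    {Ω : Type*} [MeasurableSpace Ω] (P : Measure Ω) [IsProbabilityMeasure P]
    (n f : ℕ) (hf : f ≤ n)
    (s : Fin n → Ω → ℝ) (hs : ∀ i, MemLp (s i) 2 P)
    (H : Finset (Fin n)) (hH : H.card = n - f)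
    (b : Fin n) (hb : b ∉ H)
    (A B C D : ℝ) (hAC : A < C) (hB : 0 < B) (hD : 0 < D)
    (hmeanH : ∀ h ∈ H, ∫ ω, s h ω ∂P ≤ A)
    (hvarH : ∀ h ∈ H, variance (s h) P ≤ B)
    (hmeanB : C ≤ ∫ ω, s b ω ∂P)
    (hvarB : variance (s b) P ≤ D) :
    (P {ω | ∃ I : Finset (Fin n), I.card = n - f ∧ b ∈ I ∧
        ∀ i ∈ I, ∀ j ∉ I, s i ω ≤ s j ω}).toReal ≤
      ((n : ℝ) - f + 1) * (Real.sqrt B + Real.sqrt D) ^ 2 / (C - A) ^ 2 := by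
  set τ := balancedThreshold A B C D
  have hAτ : A < τ := by
    rw [← sub_pos, balancedThreshold_sub hB hD]; have := sub_pos.mpr hAC; positivity
  have hτC : τ < C := by
    rw [← sub_pos, sub_balancedThreshold hB hD]; have := sub_pos.mpr hAC; positivity
  have hsurvive : {ω | ∃ I : Finset (Fin n), I.card = n - f ∧ b ∈ I ∧
      ∀ i ∈ I, ∀ j ∉ I, s i ω ≤ s j ω} ⊆ {ω | ∃ h ∈ H, s b ω ≤ s h ω} :=
    fun ω ⟨_, hI, hbI, hsel⟩ => exists_mem_score_le_of_selected (hI.trans hH.symm) hbI hb hsel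
  calc P.real _ ≤ P.real {ω | ∃ h ∈ H, s b ω ≤ s h ω} := measureReal_mono hsurvive
    _ ≤ P.real {ω | s b ω ≤ τ} + ∑ h ∈ H, P.real {ω | τ ≤ s h ω} :=
      measureReal_exists_le_le_add_sum H (s b) s τ
    _ ≤ D / (C - τ) ^ 2 + ∑ _h ∈ H, B / (τ - A) ^ 2 := by
      gcongr with h hh
      · exact measureReal_le_le_div_sq_of_le_integral (hs b) hmeanB hτC hvarB
      · exact measureReal_ge_le_div_sq_of_integral_le (hs h) (hmeanH h hh) hAτ (hvarH h hh)
    _ = _ := by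
      rw [div_sq_sub_balancedThreshold hAC hB hD, div_sq_balancedThreshold_sub hAC hB hD,
        sum_const, hH, nsmul_eq_mul, Nat.cast_sub hf]
      ring

/-- Inequalities C.85–C.91: the probability that a Byzantine client `b` survives the
score-based selection of the `n − f` clients with smallest scores is at most
`(n − f + 1)·(√B + √D)²/(C − A)²`. -/
theorem byzantine_survival_probability_bound
    {Ω : Type*} [MeasurableSpace Ω] (P : Measure Ω) [IsProbabilityMeasure P]
    (n f : ℕ) (hf : f ≤ n) (hnf : 1 ≤ n - f)
    (s : Fin n → Ω → ℝ) (hs : ∀ i, MemLp (s i) 2 P)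
    (H : Finset (Fin n)) (hH : H.card = n - f)
    (b : Fin n) (hb : b ∉ H)
    (A B C D : ℝ) (hAC : A < C) (hB : 0 < B) (hD : 0 < D)
    (hmeanH : ∀ h ∈ H, ∫ ω, s h ω ∂P ≤ A)
    (hvarH : ∀ h ∈ H, variance (s h) P ≤ B)
    (hmeanB : C ≤ ∫ ω, s b ω ∂P)
    (hvarB : variance (s b) P ≤ D) :
    (P {ω | ∃ I : Finset (Fin n), I.card = n - f ∧ b ∈ I ∧
        ∀ i ∈ I, ∀ j ∉ I, s i ω ≤ s j ω}).toReal ≤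
      ((n : ℝ) - f + 1) * (Real.sqrt B + Real.sqrt D) ^ 2 / (C - A) ^ 2 :=
  byzantine_survival_probability_bound_general P n f hf s hs H hH b hb A B C D hAC hB hD hmeanH
    hvarH hmeanB hvarB
end
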